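/- (Theorem 3, Case 2.) Let Ξ > 0, q_c > 0, q_max > 0 and γ_th > 0 with γ_th/Ξ < q_max. Define F_EE(q) = ln(1 + qΞ) / ((q + q_c)·ln 2) and F̂_EE(q) = ((q + q_c)/(1 + qΞ))·Ξ − ln(1 + qΞ) for q ≥ 0, and suppose F̂_EE(q_max) < 0, with q_o ∈ (0, q_max) the unique zero of F̂_EE. Then F_EE is increasing on (0, q_o] and decreasing on [q_o, q_max], and q* = max{q_o, γ_th/Ξ} maximizes F_EE over the feasible set {q : γ_th/Ξ ≤ q ≤ q_max}; that is, F_EE(q) ≤ F_EE(q*) for every q with γ_th/Ξ ≤ q ≤ q_max. -/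

import Mathlib

open Real

/-- Energy efficiency `F_EE(q) = ln(1 + qΞ) / ((q + q_c)·ln 2)`. -/
noncomputable def FEE (Ξ q_c q : ℝ) : ℝ :=
  Real.log (1 + q * Ξ) / ((q + q_c) * Real.log 2)

/-- Auxiliary function `F̂_EE(q) = ((q + q_c)/(1 + qΞ))·Ξ − ln(1 + qΞ)`. -/
noncomputable def FhatEE (Ξ q_c q : ℝ) : ℝ :=
  (q + q_c) / (1 + q * Ξ) * Ξ - Real.log (1 + q * Ξ)

/-!
`F_EE′(q) = F̂_EE(q) / ((q + q_c)² ln 2)` and `F̂_EE′(q) = -Ξ²(q + q_c)/(1 + qΞ)² < 0` for `q > 0`,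
so `F̂_EE` is strictly decreasing on `[0, ∞)` and changes sign only at its zero `q_o`: `F_EE`
increases on `[0, q_o]` and decreases on `[q_o, ∞)`. A feasible `q` is therefore dominated by `q_o`
when `q ≤ q_o`, and by `max q_o (γ_th/Ξ) ∈ [q_o, q]` otherwise.
-/

open Set

lemma hasDerivAt_one_add_mul (Ξ q : ℝ) : HasDerivAt (fun q : ℝ => 1 + q * Ξ) Ξ q := by
  simpa using ((hasDerivAt_id' q).mul_const Ξ).const_add 1

lemma hasDerivAt_FhatEE (Ξ q_c : ℝ) {q : ℝ} (hq : 1 + q * Ξ ≠ 0) :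
    HasDerivAt (FhatEE Ξ q_c) (-(Ξ ^ 2 * (q + q_c)) / (1 + q * Ξ) ^ 2) q := by
  have h := ((((hasDerivAt_id' q).add_const q_c).div (hasDerivAt_one_add_mul Ξ q) hq).mul_const
    Ξ).sub ((hasDerivAt_one_add_mul Ξ q).log hq)
  refine (h : HasDerivAt (FhatEE Ξ q_c) _ q).congr_deriv ?_
  field_simp
  ring

lemma hasDerivAt_FEE (Ξ : ℝ) {q_c q : ℝ} (hq : 1 + q * Ξ ≠ 0) (hqc : q + q_c ≠ 0) :
    HasDerivAt (FEE Ξ q_c) (FhatEE Ξ q_c q / ((q + q_c) ^ 2 * log 2)) q := by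
  have hlog2 : log 2 ≠ 0 := (log_pos one_lt_two).ne'
  have h := ((hasDerivAt_one_add_mul Ξ q).log hq).div
    (((hasDerivAt_id' q).add_const q_c).mul_const (log 2)) (mul_ne_zero hqc hlog2)
  refine (h : HasDerivAt (FEE Ξ q_c) _ q).congr_deriv ?_
  unfold FhatEE
  field_simp

lemma continuousOn_FhatEE {Ξ : ℝ} (hΞ : 0 ≤ Ξ) (q_c : ℝ) :
    ContinuousOn (FhatEE Ξ q_c) (Ici 0) := fun q hq =>
  (hasDerivAt_FhatEE Ξ q_c (by nlinarith [mem_Ici.mp hq])).continuousAt.continuousWithinAt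

lemma continuousOn_FEE {Ξ q_c : ℝ} (hΞ : 0 ≤ Ξ) (hqc : 0 < q_c) :
    ContinuousOn (FEE Ξ q_c) (Ici 0) := fun q hq =>
  (hasDerivAt_FEE Ξ (by nlinarith [mem_Ici.mp hq])
    (by linarith [mem_Ici.mp hq])).continuousAt.continuousWithinAt

lemma strictAntiOn_FhatEE {Ξ q_c : ℝ} (hΞ : 0 < Ξ) (hqc : 0 ≤ q_c) :
    StrictAntiOn (FhatEE Ξ q_c) (Ici 0) := by
  refine strictAntiOn_of_hasDerivWithinAt_neg (convex_Ici 0)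
    (f' := fun q => -(Ξ ^ 2 * (q + q_c)) / (1 + q * Ξ) ^ 2) (continuousOn_FhatEE hΞ.le q_c)
    (fun q hq => ?_) (fun q hq => ?_)
  all_goals rw [interior_Ici] at hq; have hq : 0 < q := hq
  · exact (hasDerivAt_FhatEE Ξ q_c (by nlinarith)).hasDerivWithinAt
  · have : 0 < Ξ ^ 2 * (q + q_c) := by positivity
    exact div_neg_of_neg_of_pos (neg_neg_of_pos this) (by positivity)

section

variable {Ξ q_c q_o : ℝ}

lemma monotoneOn_FEE (hΞ : 0 < Ξ) (hqc : 0 < q_c) (hzero : FhatEE Ξ q_c q_o = 0) :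
    MonotoneOn (FEE Ξ q_c) (Icc 0 q_o) := by
  refine monotoneOn_of_hasDerivWithinAt_nonneg (convex_Icc 0 q_o)
    (f' := fun q => FhatEE Ξ q_c q / ((q + q_c) ^ 2 * log 2))
    ((continuousOn_FEE hΞ.le hqc).mono Icc_subset_Ici_self) (fun q hq => ?_) (fun q hq => ?_)
  all_goals rw [interior_Icc] at hq; obtain ⟨hq0, hqo⟩ := hq
  · exact (hasDerivAt_FEE Ξ (by nlinarith) (by linarith)).hasDerivWithinAt
  · have : 0 < FhatEE Ξ q_c q := hzero ▸
      strictAntiOn_FhatEE hΞ hqc.le hq0.le (hq0.trans hqo).le hqo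
    have := log_pos one_lt_two
    positivity

lemma antitoneOn_FEE (hΞ : 0 < Ξ) (hqc : 0 < q_c) (hq_o : 0 ≤ q_o)
    (hzero : FhatEE Ξ q_c q_o = 0) : AntitoneOn (FEE Ξ q_c) (Ici q_o) := by
  refine antitoneOn_of_hasDerivWithinAt_nonpos (convex_Ici q_o)
    (f' := fun q => FhatEE Ξ q_c q / ((q + q_c) ^ 2 * log 2))
    ((continuousOn_FEE hΞ.le hqc).mono (Ici_subset_Ici.mpr hq_o)) (fun q hq => ?_)
    (fun q hq => ?_)
  all_goals rw [interior_Ici] at hq; have hq : q_o < q := hq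
  · exact (hasDerivAt_FEE Ξ (by nlinarith) (by linarith)).hasDerivWithinAt
  · have : FhatEE Ξ q_c q < 0 := hzero ▸
      strictAntiOn_FhatEE hΞ hqc.le hq_o (hq_o.trans hq.le) hq
    exact div_nonpos_of_nonpos_of_nonneg this.le (by have := log_pos one_lt_two; positivity)

end

theorem FEE_maximizer_case2_general (Ξ q_c q_max γ_th : ℝ) (hΞ : 0 < Ξ) (hqc : 0 < q_c)
    (hγ : 0 < γ_th) (q_o : ℝ) (hqo : q_o ∈ Set.Ioo 0 q_max)
    (hzero : FhatEE Ξ q_c q_o = 0) :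
    MonotoneOn (FEE Ξ q_c) (Set.Ioc 0 q_o) ∧
      AntitoneOn (FEE Ξ q_c) (Set.Icc q_o q_max) ∧
      ∀ q : ℝ, γ_th / Ξ ≤ q → q ≤ q_max →
        FEE Ξ q_c q ≤ FEE Ξ q_c (max q_o (γ_th / Ξ)) := by
  have hmono := monotoneOn_FEE hΞ hqc hzero
  have hanti := antitoneOn_FEE hΞ hqc hqo.1.le hzero
  refine ⟨hmono.mono Ioc_subset_Icc_self, hanti.mono Icc_subset_Ici_self, fun q hq _ => ?_⟩
  have hq0 : 0 ≤ q := (div_pos hγ hΞ).le.trans hq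
  rcases le_total q q_o with hle | hge
  · rw [max_eq_left (hq.trans hle)]
    exact hmono ⟨hq0, hle⟩ ⟨hq0.trans hle, le_rfl⟩ hle
  · exact hanti (mem_Ici.mpr (le_max_left _ _)) hge (max_le hge hq)

/-- Theorem 3, Case 2: if `F̂_EE(q_max) < 0` and `q_o ∈ (0, q_max)` is the
(unique) zero of `F̂_EE`, then `F_EE` is increasing on `(0, q_o]`, decreasing on
`[q_o, q_max]`, and `q* = max {q_o, γ_th/Ξ}` maximizes `F_EE` over the feasible set
`{q : γ_th/Ξ ≤ q ≤ q_max}`. -/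
theorem FEE_maximizer_case2 (Ξ q_c q_max γ_th : ℝ) (hΞ : 0 < Ξ) (hqc : 0 < q_c)
    (hqm : 0 < q_max) (hγ : 0 < γ_th) (hfeas : γ_th / Ξ < q_max)
    (hneg : FhatEE Ξ q_c q_max < 0) (q_o : ℝ) (hqo : q_o ∈ Set.Ioo 0 q_max)
    (hzero : FhatEE Ξ q_c q_o = 0) :
    MonotoneOn (FEE Ξ q_c) (Set.Ioc 0 q_o) ∧
      AntitoneOn (FEE Ξ q_c) (Set.Icc q_o q_max) ∧
      ∀ q : ℝ, γ_th / Ξ ≤ q → q ≤ q_max →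
        FEE Ξ q_c q ≤ FEE Ξ q_c (max q_o (γ_th / Ξ)) :=
  FEE_maximizer_case2_general Ξ q_c q_max γ_th hΞ hqc hγ q_o hqo hzero
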